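/- arXiv:2507.10272 — 2 statements merged into one kernel-verified Lean document; each statement's English description precedes it below -/
import Mathlib

section
/- Define sequences m_k = 4^k, a_k = (4^k + 2^k)/2, b_k = (4^k - 2^k)/2 for k ≥ 1, so that a_k + b_k = m_k and a_k - b_k = 2^k. If a function f: ℝ → ℂ satisfies f(ξ) = f(ξ/2)³ f(-ξ/2) for all ξ, then for every k ≥ 1, f(ξ) = f(ξ/√(m_k))^{a_k} · f(-ξ/√(m_k))^{b_k}. -/
/-- If `f : ℝ → ℂ` satisfies `f(ξ) = f(ξ/2)³ f(-ξ/2)` for all `ξ`, then for every `k ≥ 1`,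
`f(ξ) = f(ξ/√(m_k))^{a_k} · f(-ξ/√(m_k))^{b_k}` where `m_k = 4^k`, `a_k = (4^k+2^k)/2`,
`b_k = (4^k-2^k)/2`. -/
theorem iterated_convolution_identity (f : ℝ → ℂ)
    (hf : ∀ ξ : ℝ, f ξ = (f (ξ / 2)) ^ 3 * f (-(ξ / 2))) :
    ∀ k : ℕ, 1 ≤ k → ∀ ξ : ℝ,
      f ξ = (f (ξ / Real.sqrt (4 ^ k))) ^ ((4 ^ k + 2 ^ k) / 2 : ℕ) *
            (f (-(ξ / Real.sqrt (4 ^ k)))) ^ ((4 ^ k - 2 ^ k) / 2 : ℕ) := by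
  have hsq : ∀ k : ℕ, Real.sqrt (4 ^ k) = 2 ^ k := by
    intro k
    rw [show (4:ℝ) = 2^2 by norm_num, ← pow_mul, mul_comm, pow_mul]
    exact Real.sqrt_sq (by positivity)
  intro k
  induction k with
  | zero => omega
  | succ n ih =>
    intro _ ξ
    rcases Nat.eq_zero_or_pos n with h0 | hn
    · subst h0
      rw [hsq]
      norm_num [hf ξ]
    · have key := ih hn ξ
      rw [hsq] at key ⊢
      have e1 : ξ / 2 ^ n / 2 = ξ / (2:ℝ) ^ (n+1) := by
        rw [div_div, ← pow_succ]
      have e2 : -(ξ / 2 ^ n) / 2 = -(ξ / (2:ℝ) ^ (n+1)) := by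
        rw [neg_div, e1]
      have h1 : f (ξ / 2 ^ n) = (f (ξ / 2 ^ (n+1))) ^ 3 * f (-(ξ / 2 ^ (n+1))) := by
        rw [hf (ξ / 2 ^ n), e1]
      have h2 : f (-(ξ / 2 ^ n)) = (f (-(ξ / 2 ^ (n+1)))) ^ 3 * f (ξ / 2 ^ (n+1)) := by
        rw [hf (-(ξ / 2 ^ n)), e2, neg_neg]
      have hp : 2 ∣ 4 ^ n := dvd_pow (by norm_num) hn.ne'
      have hq : 2 ∣ 2 ^ n := dvd_pow_self 2 hn.ne'
      have hle : 2 ^ n ≤ 4 ^ n := Nat.pow_le_pow_left (by norm_num) n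
      have hA : ((4 ^ (n+1) + 2 ^ (n+1)) / 2 : ℕ)
          = 3 * ((4 ^ n + 2 ^ n) / 2) + (4 ^ n - 2 ^ n) / 2 := by
        obtain ⟨p, hp⟩ := hp; obtain ⟨q, hq⟩ := hq
        rw [pow_succ, pow_succ]; omega
      have hB : ((4 ^ (n+1) - 2 ^ (n+1)) / 2 : ℕ)
          = ((4 ^ n + 2 ^ n) / 2) + 3 * ((4 ^ n - 2 ^ n) / 2) := by
        obtain ⟨p, hp⟩ := hp; obtain ⟨q, hq⟩ := hq
        rw [pow_succ, pow_succ]; omega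
      rw [hA, hB, key, h1, h2]
      ring
end

section
/- Let g : ℝ → ℂ be a function with g(x) = 1 - c·x²/4 + o(x²) as x → 0, where c ≥ 0 is a real constant, and suppose |g(x)| ≤ 1 for all x. Then with m_k = 4^k, a_k = (4^k+2^k)/2, b_k = (4^k-2^k)/2, the limit lim_{k→∞} g(x/√(m_k))^{a_k} · g(-x/√(m_k))^{b_k} equals exp(-c x²/4) for each fixed real x. -/
/-!
Both factors are compared with the common real center `p = 1 - c x² / (4 · 4^k)`: since
`|g| ≤ 1`, replacing a base of modulus at most one inside an `n`-th power costs at most `n` times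
its distance to the center, and by the second-order expansion `4^k` times that distance tends to
zero. The exponents add up to `4^k`, and `p ^ (4^k) → exp(-c x² / 4)`.
-/

open Asymptotics Filter Topology

section PowerComparison

variable {R : Type*} [NormedCommRing R] [NormOneClass R]

theorem norm_pow_le_one_of_norm_le_one {z : R} (hz : ‖z‖ ≤ 1) (n : ℕ) : ‖z ^ n‖ ≤ 1 :=
  (norm_pow_le z n).trans (pow_le_one₀ (norm_nonneg z) hz)

theorem norm_pow_sub_pow_le_of_norm_le_one {z p : R} (hz : ‖z‖ ≤ 1) (hp : ‖p‖ ≤ 1) (n : ℕ) :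
    ‖z ^ n - p ^ n‖ ≤ n * ‖z - p‖ := by
  rw [← geom_sum₂_mul z p n]
  refine (norm_mul_le _ _).trans (mul_le_mul_of_nonneg_right ?_ (norm_nonneg _))
  calc ‖∑ i ∈ Finset.range n, z ^ i * p ^ (n - 1 - i)‖
      ≤ ∑ i ∈ Finset.range n, ‖z ^ i * p ^ (n - 1 - i)‖ := norm_sum_le _ _
    _ ≤ ∑ _i ∈ Finset.range n, (1 : ℝ) := by
        refine Finset.sum_le_sum fun i _ => (norm_mul_le _ _).trans ?_
        exact mul_le_one₀ (norm_pow_le_one_of_norm_le_one hz i) (norm_nonneg _)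
          (norm_pow_le_one_of_norm_le_one hp _)
    _ = n := by simp

theorem norm_pow_mul_pow_sub_pow_add_le {z w p : R} (hz : ‖z‖ ≤ 1) (hw : ‖w‖ ≤ 1)
    (hp : ‖p‖ ≤ 1) (a b : ℕ) :
    ‖z ^ a * w ^ b - p ^ (a + b)‖ ≤ a * ‖z - p‖ + b * ‖w - p‖ := by
  calc ‖z ^ a * w ^ b - p ^ (a + b)‖
      = ‖(z ^ a - p ^ a) * w ^ b + p ^ a * (w ^ b - p ^ b)‖ := by rw [pow_add]; ring_nf
    _ ≤ ‖z ^ a - p ^ a‖ * ‖w ^ b‖ + ‖p ^ a‖ * ‖w ^ b - p ^ b‖ :=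
        (norm_add_le _ _).trans (add_le_add (norm_mul_le _ _) (norm_mul_le _ _))
    _ ≤ ‖z ^ a - p ^ a‖ * 1 + 1 * ‖w ^ b - p ^ b‖ := by
        gcongr
        exacts [norm_pow_le_one_of_norm_le_one hw b, norm_pow_le_one_of_norm_le_one hp a]
    _ ≤ a * ‖z - p‖ + b * ‖w - p‖ := by
        rw [mul_one, one_mul]
        exact add_le_add (norm_pow_sub_pow_le_of_norm_le_one hz hp a)
          (norm_pow_sub_pow_le_of_norm_le_one hw hp b)

theorem tendsto_pow_mul_pow_of_tendsto_pow {ι : Type*} {l : Filter ι} {z w p : ι → R}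
    {a b n : ι → ℕ} {L : R} (hab : ∀ i, a i + b i = n i)
    (hz : ∀ᶠ i in l, ‖z i‖ ≤ 1) (hw : ∀ᶠ i in l, ‖w i‖ ≤ 1) (hp : ∀ᶠ i in l, ‖p i‖ ≤ 1)
    (hzp : Tendsto (fun i => (n i : ℝ) * ‖z i - p i‖) l (𝓝 0))
    (hwp : Tendsto (fun i => (n i : ℝ) * ‖w i - p i‖) l (𝓝 0))
    (hpL : Tendsto (fun i => p i ^ n i) l (𝓝 L)) :
    Tendsto (fun i => z i ^ a i * w i ^ b i) l (𝓝 L) := by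
  have hclose : Tendsto (fun i => z i ^ a i * w i ^ b i - p i ^ n i) l (𝓝 0) := by
    rw [tendsto_zero_iff_norm_tendsto_zero]
    refine squeeze_zero' (Eventually.of_forall fun i => norm_nonneg _) ?_
      (by simpa using hzp.add hwp)
    filter_upwards [hz, hw, hp] with i hzi hwi hpi
    have ha : (a i : ℝ) ≤ n i := by exact_mod_cast hab i ▸ Nat.le_add_right (a i) (b i)
    have hb : (b i : ℝ) ≤ n i := by exact_mod_cast hab i ▸ Nat.le_add_left (b i) (a i)
    calc ‖z i ^ a i * w i ^ b i - p i ^ n i‖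
        ≤ a i * ‖z i - p i‖ + b i * ‖w i - p i‖ :=
          hab i ▸ norm_pow_mul_pow_sub_pow_add_le hzi hwi hpi (a i) (b i)
      _ ≤ n i * ‖z i - p i‖ + n i * ‖w i - p i‖ := by gcongr
  simpa using hpL.add hclose

end PowerComparison

theorem tendsto_mul_norm_sub_of_isLittleO_sq {g : ℝ → ℂ} {α : ℂ}
    (hexp : (fun t : ℝ => g t - (1 - α * (t : ℂ) ^ 2)) =o[𝓝 0] fun t : ℝ => t ^ 2)
    {ι : Type*} {l : Filter ι} {s : ι → ℝ} (hs : Tendsto s l atTop) (x : ℝ) :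
    Tendsto (fun i => s i * ‖g (x / √(s i)) - (1 - α * ↑(x ^ 2 / s i))‖) l (𝓝 0) := by
  have ht : Tendsto (fun i => x / √(s i)) l (𝓝 0) :=
    tendsto_const_nhds.div_atTop (Real.tendsto_sqrt_atTop.comp hs)
  have hsq : ∀ᶠ i in l, (x / √(s i)) ^ 2 = x ^ 2 / s i := by
    filter_upwards [hs.eventually_ge_atTop 0] with i hi
    rw [div_pow, Real.sq_sqrt hi]
  have hlo : (fun i => g (x / √(s i)) - (1 - α * ↑(x ^ 2 / s i))) =o[l] fun i => (s i)⁻¹ := by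
    refine ((hexp.comp_tendsto ht).congr' ?_ hsq).trans_isBigO ?_
    · filter_upwards [hsq] with i hi
      simp only [Function.comp_apply, ← Complex.ofReal_pow, hi]
    · simpa only [div_eq_mul_inv] using (isBigO_refl _ l).const_mul_left (x ^ 2)
  refine hlo.norm_left.tendsto_div_nhds_zero.congr fun i => ?_
  rw [div_inv_eq_mul, mul_comm]

theorem norm_one_sub_ofReal_le_one {r : ℝ} (h0 : 0 ≤ r) (h2 : r ≤ 2) : ‖1 - (r : ℂ)‖ ≤ 1 := by
  rw [← Complex.ofReal_one, ← Complex.ofReal_sub, Complex.norm_real, Real.norm_eq_abs, abs_le]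
  constructor <;> linarith

theorem Nat.add_div_two_add_sub_div_two {m n : ℕ} (hnm : n ≤ m) (he : Even (m + n)) :
    (m + n) / 2 + (m - n) / 2 = m := by
  obtain ⟨j, hj⟩ := he
  omega

theorem even_four_pow_add_two_pow (k : ℕ) : Even (4 ^ k + 2 ^ k) := by
  rw [show 4 ^ k = 2 ^ k * 2 ^ k by rw [← mul_pow]; norm_num]
  exact Nat.even_mul_succ_self _

theorem limit_gaussian_general (g : ℝ → ℂ) (c : ℝ) (hc : 0 ≤ c)
    (hexp : (fun x : ℝ => g x - (1 - (c / 4 : ℂ) * (x : ℂ) ^ 2)) =o[nhds 0]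
      (fun x : ℝ => x ^ 2))
    (hbd : ∀ x : ℝ, ‖g x‖ ≤ 1) (x : ℝ) :
    Tendsto (fun k : ℕ =>
        (g (x / Real.sqrt (4 ^ k))) ^ ((4 ^ k + 2 ^ k) / 2 : ℕ) *
        (g (-(x / Real.sqrt (4 ^ k)))) ^ ((4 ^ k - 2 ^ k) / 2 : ℕ))
      atTop (nhds (Complex.exp (-((c : ℂ) * (x : ℂ) ^ 2) / 4))) := by
  have h4 : Tendsto (fun k : ℕ => (4 : ℝ) ^ k) atTop atTop :=
    tendsto_pow_atTop_atTop_of_one_lt (by norm_num)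
  have hplus := tendsto_mul_norm_sub_of_isLittleO_sq hexp h4 x
  have hminus := tendsto_mul_norm_sub_of_isLittleO_sq hexp h4 (-x)
  simp only [neg_sq, neg_div] at hminus
  have hr : Tendsto (fun k : ℕ => c / 4 * (x ^ 2 / 4 ^ k)) atTop (𝓝 0) := by
    simpa using (tendsto_const_nhds.div_atTop h4).const_mul (c / 4)
  have hp : ∀ᶠ k : ℕ in atTop, ‖1 - (c / 4 : ℂ) * ((x ^ 2 / 4 ^ k : ℝ) : ℂ)‖ ≤ 1 := by
    filter_upwards [hr.eventually (ge_mem_nhds one_pos)] with k hk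
    have := norm_one_sub_ofReal_le_one (r := c / 4 * (x ^ 2 / 4 ^ k)) (by positivity)
      (by linarith)
    push_cast at this ⊢
    exact this
  have hpL : Tendsto (fun k : ℕ => (1 - (c / 4 : ℂ) * ((x ^ 2 / 4 ^ k : ℝ) : ℂ)) ^ 4 ^ k) atTop
      (𝓝 (Complex.exp (-((c : ℂ) * (x : ℂ) ^ 2) / 4))) := by
    refine ((Complex.tendsto_one_add_div_pow_exp _).comp
      (tendsto_pow_atTop_atTop_of_one_lt (by norm_num : 1 < 4))).congr fun k => ?_
    simp only [Function.comp_apply]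
    push_cast
    ring
  exact tendsto_pow_mul_pow_of_tendsto_pow
    (fun k => Nat.add_div_two_add_sub_div_two (Nat.pow_le_pow_left (by norm_num) k)
      (even_four_pow_add_two_pow k))
    (.of_forall fun _ => hbd _) (.of_forall fun _ => hbd _) hp
    (by exact_mod_cast hplus) (by exact_mod_cast hminus) hpL

/-- Let `g : ℝ → ℂ` be continuous at `0` with `g 0 = 1`, admit the second-order expansion
`g(x) = 1 - (c/4)x² + o(x²)` near `0` with `c ≥ 0`, and satisfy `|g(x)| ≤ 1` for all `x`.
Then with `m_k = 4^k`, `a_k = (4^k+2^k)/2`, `b_k = (4^k-2^k)/2`,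
`lim_{k→∞} g(x/√(m_k))^{a_k} · g(-x/√(m_k))^{b_k} = exp(-c x²/4)` for each fixed `x`. -/
theorem limit_gaussian (g : ℝ → ℂ) (c : ℝ) (hc : 0 ≤ c)
    (hg0 : g 0 = 1) (hcont : ContinuousAt g 0)
    (hexp : (fun x : ℝ => g x - (1 - (c / 4 : ℂ) * (x : ℂ) ^ 2)) =o[nhds 0]
      (fun x : ℝ => x ^ 2))
    (hbd : ∀ x : ℝ, ‖g x‖ ≤ 1) (x : ℝ) :
    Tendsto (fun k : ℕ =>
        (g (x / Real.sqrt (4 ^ k))) ^ ((4 ^ k + 2 ^ k) / 2 : ℕ) *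
        (g (-(x / Real.sqrt (4 ^ k)))) ^ ((4 ^ k - 2 ^ k) / 2 : ℕ))
      atTop (nhds (Complex.exp (-((c : ℂ) * (x : ℂ) ^ 2) / 4))) :=
  limit_gaussian_general g c hc hexp hbd x
end
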